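/- Let R be a commutative ring having two distinct prime ideals P1 and P2 with P1 ∩ P2 = (0). Then every nonzero annihilating-ideal of R is contained in P1 or in P2, any two nonzero annihilating-ideals contained in the same Pi have nonzero product, and any two with I ⊆ P1, J ⊆ P2 satisfy IJ = (0). In particular AG(R) is a complete bipartite graph. -/

import Mathlib

/-! An annihilating ideal `I` satisfies `I * Ann(I) = 0`, so for each prime `Pᵢ` either
`I ⊆ Pᵢ` or `Ann(I) ⊆ Pᵢ`; the latter cannot hold for both primes since `Ann(I) ≠ 0` and
`P₁ ∩ P₂ = 0`. If `I, J ⊆ P₁` and `IJ = 0 ⊆ P₂`, primality of `P₂` puts `I` or `J` in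
`P₁ ∩ P₂ = 0`. Ideals on opposite sides multiply into `P₁ ∩ P₂ = 0`. -/

namespace Ideal

variable {R : Type*} [CommSemiring R]

theorem le_or_annihilator_le_of_isPrime {P : Ideal R} (hP : P.IsPrime) (I : Ideal R) :
    I ≤ P ∨ Submodule.annihilator I ≤ P :=
  hP.mul_le.mp (by rw [Submodule.mul_annihilator]; exact bot_le)

theorem le_or_le_of_annihilator_ne_bot {P Q : Ideal R} (hP : P.IsPrime) (hQ : Q.IsPrime)
    (hPQ : P ⊓ Q = ⊥) {I : Ideal R} (hI : Submodule.annihilator I ≠ ⊥) : I ≤ P ∨ I ≤ Q := by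
  rcases le_or_annihilator_le_of_isPrime hP I with hIP | hAP
  · exact .inl hIP
  rcases le_or_annihilator_le_of_isPrime hQ I with hIQ | hAQ
  · exact .inr hIQ
  exact absurd (le_bot_iff.mp (hPQ ▸ le_inf hAP hAQ)) hI

theorem mul_ne_bot_of_le_of_inf_eq_bot {P Q : Ideal R} (hQ : Q.IsPrime) (hPQ : P ⊓ Q = ⊥)
    {I J : Ideal R} (hI : I ≠ ⊥) (hJ : J ≠ ⊥) (hIP : I ≤ P) (hJP : J ≤ P) : I * J ≠ ⊥ := by
  intro hIJ
  rcases hQ.mul_le.mp (hIJ ▸ bot_le) with hIQ | hJQ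
  · exact hI (le_bot_iff.mp (hPQ ▸ le_inf hIP hIQ))
  · exact hJ (le_bot_iff.mp (hPQ ▸ le_inf hJP hJQ))

theorem mul_eq_bot_of_le_of_le_of_inf_eq_bot {P Q I J : Ideal R} (hPQ : P ⊓ Q = ⊥)
    (hIP : I ≤ P) (hJQ : J ≤ Q) : I * J = ⊥ :=
  le_bot_iff.mp (hPQ ▸ mul_le_inf.trans (inf_le_inf hIP hJQ))

end Ideal

theorem AG_complete_bipartite_of_two_primes {R : Type*} [CommRing R]
    (P₁ P₂ : Ideal R) (hP₁ : P₁.IsPrime) (hP₂ : P₂.IsPrime)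
    (hint : P₁ ⊓ P₂ = ⊥) :
    (∀ I : Ideal R, I ≠ ⊥ → Submodule.annihilator I ≠ ⊥ → I ≤ P₁ ∨ I ≤ P₂) ∧
    (∀ I J : Ideal R, I ≠ ⊥ → J ≠ ⊥ → Submodule.annihilator I ≠ ⊥ →
      Submodule.annihilator J ≠ ⊥ → I ≠ J →
      ((I ≤ P₁ → J ≤ P₁ → I * J ≠ ⊥) ∧ (I ≤ P₂ → J ≤ P₂ → I * J ≠ ⊥) ∧
        (I ≤ P₁ → J ≤ P₂ → I * J = ⊥))) :=
  ⟨fun _ _ hann => Ideal.le_or_le_of_annihilator_ne_bot hP₁ hP₂ hint hann,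
    fun _ _ hI hJ _ _ _ =>
      ⟨Ideal.mul_ne_bot_of_le_of_inf_eq_bot hP₂ hint hI hJ,
        Ideal.mul_ne_bot_of_le_of_inf_eq_bot hP₁ (inf_comm P₁ P₂ ▸ hint) hI hJ,
        Ideal.mul_eq_bot_of_le_of_le_of_inf_eq_bot hint⟩⟩
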